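/- Let λ ∈ (0,1) and σ > 0. Let c be the unique zero of f(c) = exp((c²−1)/c) − c²/(1−λ) in (1, ∞), set s̄ = exp((c²−1)/c) and g(s) = ((c+1) + c·log s)/(c+1 − log s), and define μ̃(s) = σ²·g'(s)²·s²/(g(s)(c+g(s))) and σ̃(s) = σ·g'(s)·s/g(s). Then ∫₁^{s̄} (μ̃(s)²/(2σ̃(s)²)) · (1/(log s̄)) · s^(−1) ds = σ² / (2(1+c)(1+c − log s̄)). -/

import Mathlib

/-!
With `ℓ = log s`, the function `g(s) = ((c + 1) + c ℓ) / (c + 1 - ℓ)` satisfies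
`c + g = (c + 1)² / (c + 1 - ℓ)` and `s g' = (c + 1)² / (c + 1 - ℓ)²`.
Since `μ̃ = σ̃² g / (c + g)`, the integrand `μ̃² / (2 σ̃²) · s⁻¹ = (σ s g' / (c + g))² / (2 s)`
collapses to `σ² g' / (2 (c + 1)²)`, so the integral is `σ² (g(s̄) - g(1)) / (2 (c + 1)² log s̄)`
with `g(1) = 1` and `g(s̄) - 1 = (c + 1) log s̄ / (c + 1 - log s̄)`.
-/

open Real MeasureTheory intervalIntegral

noncomputable def logMobius (c s : ℝ) : ℝ := ((c + 1) + c * log s) / (c + 1 - log s)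

section logMobius

variable {c s : ℝ}

theorem logMobius_one (hc : c + 1 ≠ 0) : logMobius c 1 = 1 := by
  simp [logMobius, hc]

theorem add_logMobius (hs : log s ≠ c + 1) :
    c + logMobius c s = (c + 1) ^ 2 / (c + 1 - log s) := by
  have : c + 1 - log s ≠ 0 := sub_ne_zero.mpr hs.symm
  rw [logMobius]
  field_simp
  ring

theorem logMobius_pos (hc : 0 ≤ c) (hs₀ : 0 ≤ log s) (hs : log s < c + 1) :
    0 < logMobius c s :=
  div_pos (by positivity) (by linarith)

theorem hasDerivAt_logMobius (hs₀ : s ≠ 0) (hs : log s ≠ c + 1) :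
    HasDerivAt (logMobius c) ((c + 1) ^ 2 / (s * (c + 1 - log s) ^ 2)) s := by
  have hD : c + 1 - log s ≠ 0 := sub_ne_zero.mpr hs.symm
  have hlog := hasDerivAt_log hs₀
  refine (((hlog.const_mul c).const_add (c + 1)).div (hlog.const_sub (c + 1)) hD).congr_deriv ?_
  field_simp
  ring

theorem logMobius_sq_deriv (hs₀ : s ≠ 0) (hs : log s ≠ c + 1) :
    (s * deriv (logMobius c) s / (c + logMobius c s)) ^ 2 * s⁻¹
      = deriv (logMobius c) s / (c + 1) ^ 2 := by
  have hD : c + 1 - log s ≠ 0 := sub_ne_zero.mpr hs.symm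
  rw [(hasDerivAt_logMobius hs₀ hs).deriv, add_logMobius hs]
  field_simp

theorem logMobius_sub_one (hs : log s ≠ c + 1) :
    logMobius c s - 1 = (c + 1) * log s / (c + 1 - log s) := by
  have : c + 1 - log s ≠ 0 := sub_ne_zero.mpr hs.symm
  rw [logMobius]
  field_simp
  ring

theorem integral_deriv_logMobius {a b : ℝ} (ha : 0 < a) (hab : a ≤ b) (hb : log b < c + 1) :
    ∫ s in a..b, deriv (logMobius c) s = logMobius c b - logMobius c a := by
  have hbounds : ∀ s ∈ Set.uIcc a b, s ≠ 0 ∧ log s ≠ c + 1 := by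
    intro s hs
    rw [Set.uIcc_of_le hab] at hs
    have hs₀ : 0 < s := ha.trans_le hs.1
    exact ⟨hs₀.ne', (log_le_log hs₀ hs.2).trans_lt hb |>.ne⟩
  have hderiv : ∀ s ∈ Set.uIcc a b,
      HasDerivAt (logMobius c) ((c + 1) ^ 2 / (s * (c + 1 - log s) ^ 2)) s :=
    fun s hs => hasDerivAt_logMobius (hbounds s hs).1 (hbounds s hs).2
  have hcont : ContinuousOn (fun s => (c + 1) ^ 2 / (s * (c + 1 - log s) ^ 2)) (Set.uIcc a b) := by
    have hlog : ContinuousOn log (Set.uIcc a b) :=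
      continuousOn_log.mono fun s hs => (hbounds s hs).1
    refine continuousOn_const.div (continuousOn_id.mul ((continuousOn_const.sub hlog).pow 2)) ?_
    intro s hs
    exact mul_ne_zero (hbounds s hs).1 (pow_ne_zero 2 (sub_ne_zero.mpr (hbounds s hs).2.symm))
  refine integral_eq_sub_of_hasDerivAt (fun s hs => (hderiv s hs).deriv ▸ hderiv s hs) ?_
  exact (hcont.congr fun s hs => (hderiv s hs).deriv).intervalIntegrable

end logMobius

theorem sq_div_mul_sq_div_two_mul_div_sq {x g k : ℝ} (hg : g ≠ 0) :
    (x ^ 2 / (g * k)) ^ 2 / (2 * (x / g) ^ 2) = (x / k) ^ 2 / 2 := by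
  rcases eq_or_ne x 0 with rfl | hx
  · simp
  field_simp

theorem integrand_eq_const_mul_deriv_logMobius {c s : ℝ} (hc : 0 ≤ c) (hs₁ : 1 ≤ s)
    (hs : log s < c + 1) (σ L : ℝ) :
    (σ ^ 2 * deriv (logMobius c) s ^ 2 * s ^ 2 / (logMobius c s * (c + logMobius c s))) ^ 2
        / (2 * (σ * deriv (logMobius c) s * s / logMobius c s) ^ 2) * (1 / L) * s⁻¹
      = σ ^ 2 / (2 * L) * (deriv (logMobius c) s / (c + 1) ^ 2) := by
  set d := deriv (logMobius c) s
  set G := logMobius c s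
  have hG : G ≠ 0 := (logMobius_pos hc (log_nonneg hs₁) hs).ne'
  calc _ = ((σ * d * s) ^ 2 / (G * (c + G))) ^ 2 / (2 * (σ * d * s / G) ^ 2) * (1 / L) * s⁻¹ :=
        by ring
    _ = σ ^ 2 / (2 * L) * ((s * d / (c + G)) ^ 2 * s⁻¹) := by
        rw [sq_div_mul_sq_div_two_mul_div_sq hG]
        ring
    _ = _ := by
        rw [logMobius_sq_deriv (by positivity) hs.ne]

theorem growth_optimal_growth_rate_closed_form_theta_eq_half
    (sigma c sbar : ℝ) (g mutilde sigmatilde : ℝ → ℝ)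
    (hcI : c ∈ Set.Ioi (1:ℝ))
    (hsbar : sbar = Real.exp ((c^2 - 1)/c))
    (hg : ∀ s : ℝ, g s = ((c + 1) + c * Real.log s) / (c + 1 - Real.log s))
    (hmutilde : ∀ s : ℝ, mutilde s = sigma^2 * (deriv g s)^2 * s^2 / (g s * (c + g s)))
    (hsigmatilde : ∀ s : ℝ, sigmatilde s = sigma * deriv g s * s / g s) :
    ∫ s in (1:ℝ)..sbar,
        (mutilde s)^2 / (2 * (sigmatilde s)^2) * (1 / Real.log sbar) * s⁻¹
      = sigma^2 / (2 * (1 + c) * (1 + c - Real.log sbar)) := by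
  obtain rfl : g = logMobius c := funext hg
  obtain rfl : mutilde = _ := funext hmutilde
  obtain rfl : sigmatilde = _ := funext hsigmatilde
  have hc : 1 < c := hcI
  have hL : log sbar = (c ^ 2 - 1) / c := by rw [hsbar, log_exp]
  have hL₀ : 0 < log sbar := by rw [hL]; exact div_pos (by nlinarith) (by linarith)
  have hL₁ : log sbar < c + 1 := by rw [hL, div_lt_iff₀ (by linarith)]; nlinarith
  have hsbar₁ : 1 ≤ sbar := by rw [hsbar]; exact one_le_exp (hL ▸ hL₀.le)
  have hbounds : ∀ s ∈ Set.uIcc 1 sbar, 1 ≤ s ∧ log s < c + 1 := by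
    intro s hs
    rw [Set.uIcc_of_le hsbar₁] at hs
    exact ⟨hs.1, (log_le_log (by linarith [hs.1]) hs.2).trans_lt hL₁⟩
  rw [integral_congr fun s hs => integrand_eq_const_mul_deriv_logMobius (by linarith)
      (hbounds s hs).1 (hbounds s hs).2 sigma (log sbar),
    intervalIntegral.integral_const_mul, intervalIntegral.integral_div,
    integral_deriv_logMobius one_pos hsbar₁ hL₁, logMobius_one (by linarith),
    logMobius_sub_one hL₁.ne]
  have : c + 1 - log sbar ≠ 0 := by linarith
  rw [add_comm 1 c]
  field_simp
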